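/- Let x be a positive irrational real number with x > 1, let p be a prime with p < x, assume x < N_p, and let k be an integer with 1 ≤ k ≤ p−1. Then |S_x(kN_p − x, kN_p)| − |S_x(0, x)| = Σ μ(a), the sum taken over all squarefree positive integers a < px such that p divides a, every prime factor of a is less than x, and {x/a} > {kN_p/a}. -/

import Mathlib

/-!
Let `P = ∏_{q < x} q`, which is `p · N_p` and, as `x` is irrational, the primorial of `⌊x⌋`.
The elements of `S_x(u, v)` are the integers of `(u, v)` coprime to `P`, so for `u ≥ 0`
Legendre's sieve gives `|S_x(u, v)| = ∑_{d ∣ P} μ(d) · #{m ∈ ℤ : u/d < m < v/d}`. In the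
difference `|S_x(k N_p - x, k N_p)| - |S_x(0, x)|` the term of `d` vanishes when `p ∤ d`, since
then `d ∣ k N_p` and the two intervals differ by an integer translation; when `p ∣ d` the number
`k N_p / d` is not an integer and the term is `μ(d) · [{k N_p/d} < {x/d}]`. Finally no
`d = p e > p x` contributes: `e > x` divides `k N_p` but `d` does not, so
`{k N_p/d} ≥ e/d > x/d = {x/d}`.
-/

open scoped Classical
open Finset

noncomputable section

/-- Sum of the Möbius function over positive integers `a` in the open interval `(u, v)`
that are *not* divisible by `p`. -/
def Mp' (p : ℕ) (u v : ℝ) : ℤ :=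
  ∑ a ∈ (Finset.Icc 1 ⌈v⌉₊).filter
      (fun a : ℕ => u < (a : ℝ) ∧ (a : ℝ) < v ∧ ¬ p ∣ a),
    ArithmeticFunction.moebius a

/-- Sum of the Möbius function over positive integers `a` in the open interval `(u, v)`
that *are* divisible by `p`. -/
def Mp (p : ℕ) (u v : ℝ) : ℤ :=
  ∑ a ∈ (Finset.Icc 1 ⌈v⌉₊).filter
      (fun a : ℕ => u < (a : ℝ) ∧ (a : ℝ) < v ∧ p ∣ a),
    ArithmeticFunction.moebius a

/-- `Sx y u v` : the set of positive integers in the open interval `(u, v)` all of whose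
prime divisors exceed `y`. -/
def Sx (y u v : ℝ) : Set ℕ :=
  {a : ℕ | 0 < a ∧ u < (a : ℝ) ∧ (a : ℝ) < v ∧ ∀ q : ℕ, q.Prime → q ∣ a → y < (q : ℝ)}

/-- `Np x p` : the product of all primes `q < x` with `q ≠ p`. -/
def Np (x : ℝ) (p : ℕ) : ℕ :=
  ∏ q ∈ (Finset.range ⌈x⌉₊).filter (fun q : ℕ => q.Prime ∧ (q : ℝ) < x ∧ q ≠ p), q

/-- `Aset x j` : squarefree positive integers with exactly `j` prime factors,
all of them less than `x`. -/
def Aset (x : ℝ) (j : ℕ) : Finset ℕ :=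
  (Finset.Icc 1 (⌈x⌉₊ ^ j)).filter
    (fun a => Squarefree a ∧ a.primeFactors.card = j ∧ ∀ q ∈ a.primeFactors, (q : ℝ) < x)

/-- `Nint a b` : the number of integers in the open interval `(a, b)`. -/
def Nint (a b : ℝ) : ℕ :=
  (Finset.Ioo ⌊a⌋ ⌈b⌉).card

/-- `Rres a b = (b - a) - N(a, b)`. -/
def Rres (a b : ℝ) : ℝ :=
  (b - a) - Nint a b

/-- `piR t` : the number of primes `≤ t`. -/
def piR (t : ℝ) : ℕ :=
  Nat.primeCounting ⌊t⌋₊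

open scoped ArithmeticFunction.Moebius

theorem Int.floor_sub_floor_sub_floor {k : Type*} [Field k] [LinearOrder k]
    [IsStrictOrderedRing k] [FloorRing k] (B t : k) :
    ⌊B⌋ - ⌊B - t⌋ - ⌊t⌋ = if Int.fract B < Int.fract t then 1 else 0 := by
  have hsplit : B - t = ((⌊B⌋ - ⌊t⌋ : ℤ) : k) + (Int.fract B - Int.fract t) := by
    unfold Int.fract; push_cast; ring
  rw [hsplit, Int.floor_intCast_add]
  have := Int.fract_nonneg B; have := Int.fract_lt_one B
  have := Int.fract_nonneg t; have := Int.fract_lt_one t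
  split_ifs with h
  · have : ⌊Int.fract B - Int.fract t⌋ = -1 := by
      rw [Int.floor_eq_iff]; push_cast; constructor <;> linarith
    omega
  · have : ⌊Int.fract B - Int.fract t⌋ = 0 := by
      rw [Int.floor_eq_zero_iff]; constructor <;> linarith
    omega

theorem Nint_eq_ceil_sub_floor {a b : ℝ} (h : a < b) : (Nint a b : ℤ) = ⌈b⌉ - ⌊a⌋ - 1 :=
  Int.card_Ioo_of_lt _ _ (Int.floor_lt_ceil_of_lt h)

theorem Nint_sub_sub_Nint_zero (B : ℝ) {t : ℝ} (ht : 0 < t) (ht' : Int.fract t ≠ 0) :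
    (Nint (B - t) B : ℤ) - Nint 0 t =
      if 0 < Int.fract B ∧ Int.fract B < Int.fract t then 1 else 0 := by
  rw [Nint_eq_ceil_sub_floor (by linarith), Nint_eq_ceil_sub_floor ht, Int.floor_zero,
    (Int.ceil_eq_floor_add_one_iff_notMem t).2 (Int.fract_ne_zero_iff.1 ht')]
  have htri := Int.floor_sub_floor_sub_floor B t
  rcases (Int.fract_nonneg B).eq_or_lt with hB | hB
  · obtain ⟨n, rfl⟩ := Int.fract_eq_zero_iff.1 hB.symm
    rw [if_pos (by simpa using ht'.symm.lt_of_le (Int.fract_nonneg t))] at htri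
    simp only [Int.ceil_intCast, Int.floor_intCast, Int.fract_intCast, lt_irrefl, false_and,
      if_false] at htri ⊢
    omega
  · rw [(Int.ceil_eq_floor_add_one_iff_notMem B).2 (Int.fract_ne_zero_iff.1 hB.ne')]
    simp only [hB, true_and]
    omega

theorem card_filter_dvd_Ioo_floor_ceil {u : ℝ} (v : ℝ) (hu : 0 ≤ u) {d : ℕ} (hd : 0 < d) :
    ((Ioo ⌊u⌋₊ ⌈v⌉₊).filter (d ∣ ·)).card = Nint (u / d) (v / d) := by
  have hd' : (0 : ℝ) < d := by exact_mod_cast hd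
  have hfloor : 0 ≤ ⌊u / d⌋ := Int.floor_nonneg.2 (by positivity)
  have hmul : (Ioo ⌊u⌋₊ ⌈v⌉₊).filter (d ∣ ·) =
      (Ioo ⌊u / d⌋ ⌈v / d⌉).image (fun m : ℤ => d * m.toNat) := by
    ext n
    simp only [mem_filter, mem_Ioo, mem_image, Nat.floor_lt hu, Nat.lt_ceil, Int.floor_lt,
      Int.lt_ceil, div_lt_iff₀ hd', lt_div_iff₀ hd']
    constructor
    · rintro ⟨⟨hun, hnv⟩, m, rfl⟩
      refine ⟨m, ⟨?_, ?_⟩, by simp⟩ <;> push_cast at hun hnv ⊢ <;> linarith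
    · rintro ⟨m, ⟨hum, hmv⟩, rfl⟩
      have hm : (0 : ℤ) ≤ m := hfloor.trans (Int.floor_lt.2 ((div_lt_iff₀ hd').2 hum)).le
      have hcast : ((m.toNat : ℕ) : ℝ) = m := by exact_mod_cast Int.toNat_of_nonneg hm
      refine ⟨⟨?_, ?_⟩, dvd_mul_right _ _⟩ <;> push_cast [hcast] <;> linarith
  rw [Nint, hmul, card_image_of_injOn]
  intro m₁ hm₁ m₂ hm₂ h
  have h₁ : 0 ≤ m₁ := hfloor.trans (mem_Ioo.1 hm₁).1.le
  have h₂ : 0 ≤ m₂ := hfloor.trans (mem_Ioo.1 hm₂).1.le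
  have : m₁.toNat = m₂.toNat := Nat.eq_of_mul_eq_mul_left hd h
  omega

theorem card_filter_coprime_eq_sum_moebius (s : Finset ℕ) {P : ℕ} (hP : P ≠ 0) :
    ((s.filter (Nat.Coprime · P)).card : ℤ) =
      ∑ d ∈ P.divisors, μ d * (s.filter (d ∣ ·)).card := by
  have hsieve : ∀ n, (if Nat.Coprime n P then (1 : ℤ) else 0) =
      ∑ d ∈ P.divisors, if d ∣ n then μ d else 0 := by
    intro n
    have hdiv : P.divisors.filter (· ∣ n) = (n.gcd P).divisors := by
      rw [← Nat.divisors_filter_dvd_of_dvd hP (Nat.gcd_dvd_right n P)]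
      exact filter_congr fun d hd => by
        rw [Nat.dvd_gcd_iff, and_iff_left (Nat.dvd_of_mem_divisors hd)]
    rw [← sum_filter, hdiv, ← ArithmeticFunction.coe_mul_zeta_apply,
      ArithmeticFunction.moebius_mul_coe_zeta, ArithmeticFunction.one_apply]
  calc ((s.filter (Nat.Coprime · P)).card : ℤ)
      = ∑ n ∈ s, if Nat.Coprime n P then (1 : ℤ) else 0 := by push_cast [card_filter]; rfl
    _ = ∑ d ∈ P.divisors, ∑ n ∈ s, if d ∣ n then μ d else 0 := by
      rw [sum_congr rfl fun n _ => hsieve n, sum_comm]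
    _ = ∑ d ∈ P.divisors, μ d * (s.filter (d ∣ ·)).card := by
      simp only [← sum_filter, sum_const, nsmul_eq_mul, mul_comm]

theorem coprime_primorial_iff {n m : ℕ} :
    Nat.Coprime n (primorial m) ↔ ∀ q, q.Prime → q ∣ n → m < q := by
  rw [← not_iff_not, Nat.Prime.not_coprime_iff_dvd]
  push Not
  exact exists_congr fun q => and_congr_right fun hq => and_congr_right fun _ =>
    hq.dvd_primorial_iff

theorem dvd_primorial_iff {a m : ℕ} :
    a ∣ primorial m ↔ Squarefree a ∧ ∀ q ∈ a.primeFactors, q ≤ m := by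
  constructor
  · intro h
    exact ⟨(squarefree_primorial m).squarefree_of_dvd h, fun q hq =>
      (Nat.prime_of_mem_primeFactors hq).dvd_primorial_iff.1
        ((Nat.dvd_of_mem_primeFactors hq).trans h)⟩
  · rintro ⟨ha, hq⟩
    rw [← Nat.prod_primeFactors_of_squarefree ha,
      Nat.prod_primeFactors_dvd_iff (primorial_ne_zero m), primeFactors_primorial]
    exact fun q hq' => Nat.mem_primesLE.2 ⟨hq q hq', Nat.prime_of_mem_primeFactors hq'⟩

theorem Irrational.natCast_lt_iff_le_floor {x : ℝ} (hx : Irrational x) (hx0 : 0 ≤ x) (q : ℕ) :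
    (q : ℝ) < x ↔ q ≤ ⌊x⌋₊ := by
  rw [Nat.le_floor_iff hx0, lt_iff_le_and_ne, and_iff_left (hx.ne_nat q).symm]

theorem Sx_eq_filter_coprime_primorial {y u : ℝ} (v : ℝ) (hy : 0 ≤ y) (hu : 0 ≤ u) :
    Sx y u v = ↑((Ioo ⌊u⌋₊ ⌈v⌉₊).filter (Nat.Coprime · (primorial ⌊y⌋₊))) := by
  ext n
  simp only [Sx, Set.mem_ofPred_eq, coe_filter, mem_Ioo, Nat.floor_lt hu, Nat.lt_ceil,
    coprime_primorial_iff, Nat.floor_lt hy]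
  constructor
  · rintro ⟨-, hun, hnv, hq⟩; exact ⟨⟨hun, hnv⟩, hq⟩
  · rintro ⟨⟨hun, hnv⟩, hq⟩
    exact ⟨Nat.cast_pos.1 (hu.trans_lt hun), hun, hnv, hq⟩

theorem ncard_Sx_eq_sum_moebius {y u : ℝ} (v : ℝ) (hy : 0 ≤ y) (hu : 0 ≤ u) :
    ((Sx y u v).ncard : ℤ) = ∑ d ∈ (primorial ⌊y⌋₊).divisors, μ d * Nint (u / d) (v / d) := by
  rw [Sx_eq_filter_coprime_primorial v hy hu, Set.ncard_coe_finset,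
    card_filter_coprime_eq_sum_moebius _ (primorial_ne_zero _)]
  exact sum_congr rfl fun d hd => by
    rw [card_filter_dvd_Ioo_floor_ceil v hu (Nat.pos_of_mem_divisors hd)]

theorem sum_moebius_mul_Nint_sub_eq_sum_filter {x : ℝ} (hx : Irrational x) (hx0 : 0 < x)
    (B : ℝ) (P : ℕ) :
    ∑ d ∈ P.divisors, (μ d * Nint ((B - x) / d) (B / d) - μ d * Nint (0 / d) (x / d)) =
      ∑ d ∈ P.divisors.filter (fun d : ℕ => 0 < Int.fract (B / d) ∧
        Int.fract (B / d) < Int.fract (x / d)), μ d := by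
  rw [sum_filter]
  refine sum_congr rfl fun d hd => ?_
  have hd0 : 0 < d := Nat.pos_of_mem_divisors hd
  have hxd : Int.fract (x / d) ≠ 0 := Int.fract_ne_zero_iff.2 fun ⟨n, hn⟩ =>
    (hx.div_natCast hd0.ne').ne_int n hn.symm
  rw [← mul_sub, sub_div, zero_div, Nint_sub_sub_Nint_zero _ (by positivity) hxd]
  split_ifs <;> simp

theorem mul_Np_eq_primorial {x : ℝ} (hx : Irrational x) {p : ℕ} (hp : p.Prime)
    (hpx : (p : ℝ) < x) : p * Np x p = primorial ⌊x⌋₊ := by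
  have hx0 : 0 ≤ x := (Nat.cast_nonneg p).trans hpx.le
  have hfilter : (range ⌈x⌉₊).filter (fun q : ℕ => q.Prime ∧ (q : ℝ) < x ∧ q ≠ p) =
      ((range (⌊x⌋₊ + 1)).filter Nat.Prime).erase p := by
    ext q
    simp only [mem_filter, mem_erase, mem_range, Nat.lt_ceil, Nat.lt_succ_iff,
      ← hx.natCast_lt_iff_le_floor hx0]
    tauto
  have hp_mem : p ∈ (range (⌊x⌋₊ + 1)).filter Nat.Prime :=
    mem_filter.2 ⟨mem_range.2 (Nat.lt_succ_iff.2 ((hx.natCast_lt_iff_le_floor hx0 p).1 hpx)), hp⟩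
  rw [Np, hfilter]
  exact mul_prod_erase _ (fun q => q) hp_mem

theorem div_le_fract_div {k : Type*} [Field k] [LinearOrder k] [IsStrictOrderedRing k]
    [FloorRing k] {M e a : ℕ} (heM : e ∣ M) (hea : e ∣ a) (haM : ¬ a ∣ M) :
    (e : k) / a ≤ Int.fract ((M : k) / a) := by
  rw [Int.fract_div_natCast_eq_div_natCast_mod]
  have hmod : M % a ≠ 0 := fun h => haM (Nat.dvd_of_mod_eq_zero h)
  gcongr
  exact Nat.le_of_dvd (Nat.pos_of_ne_zero hmod) ((Nat.dvd_mod_iff hea).2 heM)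

section

variable {p N M a : ℕ}

theorem fract_div_pos_iff (hp : p.Prime) (hpM : ¬ p ∣ M) (hNM : N ∣ M)
    (ha : a ∈ (p * N).divisors) : 0 < Int.fract ((M : ℝ) / a) ↔ p ∣ a := by
  obtain ⟨haPN, hPN⟩ := Nat.mem_divisors.1 ha
  have ha0 : 0 < a := Nat.pos_of_mem_divisors ha
  constructor
  · intro hpos
    by_contra hpa
    have haM : a ∣ M :=
      (((hp.coprime_iff_not_dvd.2 hpa).symm.dvd_of_dvd_mul_left haPN)).trans hNM
    rw [← Nat.cast_div_charZero haM, Int.fract_natCast] at hpos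
    exact hpos.false
  · intro hpa
    have := div_le_fract_div (k := ℝ) (one_dvd M) (one_dvd a) fun haM => hpM (hpa.trans haM)
    rw [Nat.cast_one] at this
    exact (by positivity : (0 : ℝ) < 1 / a).trans_le this

theorem lt_mul_of_fract_div_lt {x : ℝ} (hx : Irrational x) (hx0 : 0 < x) (hpM : ¬ p ∣ M)
    (hNM : N ∣ M) (ha : a ∈ (p * N).divisors) (hpa : p ∣ a)
    (h : Int.fract ((M : ℝ) / a) < Int.fract (x / a)) : (a : ℝ) < p * x := by
  obtain ⟨e, rfl⟩ := hpa
  have hpe0 : 0 < p * e := Nat.pos_of_mem_divisors ha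
  have hp0 : (0 : ℝ) < p := by exact_mod_cast Nat.pos_of_mul_pos_right hpe0
  have heN : e ∣ N :=
    Nat.dvd_of_mul_dvd_mul_left (by exact_mod_cast hp0) (Nat.dvd_of_mem_divisors ha)
  by_contra hle
  have hlt : (p : ℝ) * x < (p * e : ℕ) :=
    (not_lt.1 hle).lt_of_ne ((hx.natCast_mul (by exact_mod_cast hp0.ne')).ne_nat _)
  have hxe : x < e := by push_cast at hlt; nlinarith
  have hepe : (e : ℝ) ≤ (p * e : ℕ) := by exact_mod_cast Nat.le_of_dvd hpe0 (dvd_mul_left e p)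
  have hfract : Int.fract (x / (p * e : ℕ)) = x / (p * e : ℕ) :=
    Int.fract_eq_self.2 ⟨by positivity, (div_lt_one (by positivity)).2 (by linarith)⟩
  have := div_le_fract_div (k := ℝ) (heN.trans hNM) (dvd_mul_left e p)
    fun h => hpM ((dvd_mul_right p e).trans h)
  rw [hfract] at h
  have : x / (p * e : ℕ) < e / (p * e : ℕ) := div_lt_div_of_pos_right hxe (by positivity)
  linarith

theorem divisors_filter_fract_lt_eq {x : ℝ} (hx : Irrational x) (hx0 : 0 < x) (hp : p.Prime)
    (hPN : p * N = primorial ⌊x⌋₊) (hpM : ¬ p ∣ M) (hNM : N ∣ M) :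
    (p * N).divisors.filter (fun d : ℕ => 0 < Int.fract ((M : ℝ) / d) ∧
        Int.fract ((M : ℝ) / d) < Int.fract (x / d)) =
      (Icc 1 ⌈(p : ℝ) * x⌉₊).filter (fun a : ℕ => (a : ℝ) < p * x ∧ p ∣ a ∧ Squarefree a ∧
        (∀ q ∈ a.primeFactors, (q : ℝ) < x) ∧ Int.fract ((M : ℝ) / a) < Int.fract (x / a)) := by
  have hfactors : ∀ a : ℕ,
      (∀ q ∈ a.primeFactors, (q : ℝ) < x) ↔ ∀ q ∈ a.primeFactors, q ≤ ⌊x⌋₊ :=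
    fun a => forall₂_congr fun q _ => hx.natCast_lt_iff_le_floor hx0.le q
  ext a
  simp only [mem_filter, mem_Icc, hfactors]
  constructor
  · rintro ⟨ha, hpos, hlt⟩
    have hpa := (fract_div_pos_iff hp hpM hNM ha).1 hpos
    have hapx := lt_mul_of_fract_div_lt hx hx0 hpM hNM ha hpa hlt
    obtain ⟨hsf, hq⟩ := dvd_primorial_iff.1 (hPN ▸ Nat.dvd_of_mem_divisors ha)
    exact ⟨⟨Nat.pos_of_mem_divisors ha, (Nat.lt_ceil.2 hapx).le⟩, hapx, hpa, hsf, hq, hlt⟩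
  · rintro ⟨-, -, hpa, hsf, hq, hlt⟩
    have ha : a ∈ (p * N).divisors :=
      Nat.mem_divisors.2 ⟨hPN ▸ dvd_primorial_iff.2 ⟨hsf, hq⟩, hPN ▸ primorial_ne_zero _⟩
    exact ⟨ha, (fract_div_pos_iff hp hpM hNM ha).2 hpa, hlt⟩

end

theorem stmt_12_general (x : ℝ) (hxirr : Irrational x)
    (p : ℕ) (hp : p.Prime) (hpx : (p : ℝ) < x) (hxN : x < Np x p)
    (k : ℕ) (hk1 : 1 ≤ k) (hk2 : k ≤ p - 1) :
    ((Sx x ((k : ℝ) * Np x p - x) ((k : ℝ) * Np x p)).ncard : ℤ)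
        - ((Sx x 0 x).ncard : ℤ)
      = ∑ a ∈ (Finset.Icc 1 ⌈(p : ℝ) * x⌉₊).filter
          (fun a : ℕ => (a : ℝ) < (p : ℝ) * x ∧ p ∣ a ∧ Squarefree a ∧
            (∀ q ∈ a.primeFactors, (q : ℝ) < x) ∧
            Int.fract (((k : ℝ) * Np x p) / a) < Int.fract (x / a)),
          ArithmeticFunction.moebius a := by
  set N := Np x p
  have hx0 : 0 < x := (Nat.cast_nonneg p).trans_lt hpx
  have hPN : p * N = primorial ⌊x⌋₊ := mul_Np_eq_primorial hxirr hp hpx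
  have hpN : ¬ p ∣ N :=
    hp.coprime_iff_not_dvd.1 (Nat.squarefree_mul_iff.1 (hPN ▸ squarefree_primorial _)).1
  have hpM : ¬ p ∣ k * N := fun h =>
    (hp.dvd_mul.1 h).elim (fun hpk => by have := Nat.le_of_dvd (by omega) hpk; omega) hpN
  have hxM : x ≤ ((k * N : ℕ) : ℝ) :=
    hxN.le.trans (by exact_mod_cast Nat.le_mul_of_pos_left N hk1)
  rw [← Nat.cast_mul, ncard_Sx_eq_sum_moebius _ hx0.le (sub_nonneg.2 hxM),
    ncard_Sx_eq_sum_moebius _ hx0.le le_rfl, ← hPN, ← sum_sub_distrib,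
    sum_moebius_mul_Nint_sub_eq_sum_filter hxirr hx0,
    divisors_filter_fract_lt_eq hxirr hx0 hp hPN hpM (dvd_mul_left N k)]

theorem stmt_12 (x : ℝ) (hx : 0 < x) (hxirr : Irrational x)
    (p : ℕ) (hp : p.Prime) (hpx : (p : ℝ) < x) (hxN : x < Np x p)
    (k : ℕ) (hk1 : 1 ≤ k) (hk2 : k ≤ p - 1) :
    ((Sx x ((k : ℝ) * Np x p - x) ((k : ℝ) * Np x p)).ncard : ℤ)
        - ((Sx x 0 x).ncard : ℤ)
      = ∑ a ∈ (Finset.Icc 1 ⌈(p : ℝ) * x⌉₊).filter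
          (fun a : ℕ => (a : ℝ) < (p : ℝ) * x ∧ p ∣ a ∧ Squarefree a ∧
            (∀ q ∈ a.primeFactors, (q : ℝ) < x) ∧
            Int.fract (((k : ℝ) * Np x p) / a) < Int.fract (x / a)),
          ArithmeticFunction.moebius a :=
  stmt_12_general x hxirr p hp hpx hxN k hk1 hk2

end
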